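/- arXiv:0710.1155 — 2 statements merged into one kernel-verified Lean document; each statement's English description precedes it below -/
import Mathlib

section
/- Let F be the group ⟨γ₁, …, γₙ ∣ γ₁⋯γₙ = 1⟩ and H the subgroup generated by all γᵢ² and all γⱼγⱼ₊₁. Then H coincides with the kernel of the homomorphism F → ℤ/2ℤ sending each generator γᵢ to 1 mod 2. -/
/-- The single relation `γ₁ γ₂ ⋯ γₙ = 1` in the free group on `n` generators. -/
def prodRel (n : ℕ) : FreeGroup (Fin n) := (List.ofFn fun i : Fin n => FreeGroup.of i).prod

/-- The group `F = ⟨γ₁, …, γₙ ∣ γ₁γ₂⋯γₙ = 1⟩`. -/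
abbrev Fgp (n : ℕ) := PresentedGroup ({prodRel n} : Set (FreeGroup (Fin n)))

/-- The generating set of `H`: the squares `γᵢ²` and the consecutive products `γⱼγⱼ₊₁`. -/
def genSet (n : ℕ) : Set (Fgp n) :=
  {x | ∃ i : Fin n, x = (PresentedGroup.of i) ^ 2} ∪
  {x | ∃ i j : Fin n, (i : ℕ) + 1 = (j : ℕ) ∧
        x = PresentedGroup.of i * PresentedGroup.of j}

/-- The subgroup `H` of `F` generated by the `γᵢ²` and the `γⱼγⱼ₊₁`. -/
def Hsub (n : ℕ) : Subgroup (Fgp n) := Subgroup.closure (genSet n)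

namespace HsubAux

open PresentedGroup

variable {n : ℕ}

lemma sq_mem (i : Fin n) : (PresentedGroup.of i : Fgp n) ^ 2 ∈ Hsub n :=
  Subgroup.subset_closure (Or.inl ⟨i, rfl⟩)

lemma consec_mem {i j : Fin n} (h : (i : ℕ) + 1 = j) :
    (PresentedGroup.of i * PresentedGroup.of j : Fgp n) ∈ Hsub n :=
  Subgroup.subset_closure (Or.inr ⟨i, j, h, rfl⟩)

lemma pair_mem_add (i : Fin n) :
    ∀ k (h : (i : ℕ) + k < n),
      (PresentedGroup.of i * PresentedGroup.of ⟨(i : ℕ) + k, h⟩ : Fgp n) ∈ Hsub n := by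
  intro k
  induction k with
  | zero =>
    intro h
    have : (⟨(i : ℕ) + 0, h⟩ : Fin n) = i := Fin.ext (by simp only [Fin.val_mk]; omega)
    rw [this, ← pow_two]
    exact sq_mem i
  | succ k ih =>
    intro h
    have hm : (i : ℕ) + k < n := by omega
    set m : Fin n := ⟨(i : ℕ) + k, hm⟩ with hmdef
    set j : Fin n := ⟨(i : ℕ) + (k + 1), h⟩ with hjdef
    have h1 : (PresentedGroup.of i * PresentedGroup.of m : Fgp n) ∈ Hsub n := ih hm
    have h2 : (PresentedGroup.of m * PresentedGroup.of j : Fgp n) ∈ Hsub n :=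
      consec_mem (by simp [hmdef, hjdef]; omega)
    have key : (PresentedGroup.of i * PresentedGroup.of j : Fgp n) =
        (PresentedGroup.of i * PresentedGroup.of m) * ((PresentedGroup.of m) ^ 2)⁻¹ *
          (PresentedGroup.of m * PresentedGroup.of j) := by
      group
    rw [key]
    exact mul_mem (mul_mem h1 (inv_mem (sq_mem m))) h2

lemma pair_mem (i j : Fin n) :
    (PresentedGroup.of i * PresentedGroup.of j : Fgp n) ∈ Hsub n := by
  rcases le_or_gt (i : ℕ) (j : ℕ) with hle | hlt
  · obtain ⟨k, hk⟩ := Nat.exists_eq_add_of_le hle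
    have hj : (⟨(i : ℕ) + k, by omega⟩ : Fin n) = j := Fin.ext (by simp only [Fin.val_mk]; omega)
    have := pair_mem_add i k (by omega)
    rwa [hj] at this
  · have hji : (PresentedGroup.of j * PresentedGroup.of i : Fgp n) ∈ Hsub n := by
      obtain ⟨k, hk⟩ := Nat.exists_eq_add_of_le hlt.le
      have hj : (⟨(j : ℕ) + k, by omega⟩ : Fin n) = i := Fin.ext (by simp only [Fin.val_mk]; omega)
      have := pair_mem_add j k (by omega)
      rwa [hj] at this
    have key : (PresentedGroup.of i * PresentedGroup.of j : Fgp n) =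
        (PresentedGroup.of i) ^ 2 * (PresentedGroup.of j * PresentedGroup.of i)⁻¹ *
          (PresentedGroup.of j) ^ 2 := by group
    rw [key]
    exact mul_mem (mul_mem (sq_mem i) (inv_mem hji)) (sq_mem j)

lemma pair_inv_left (i j : Fin n) :
    ((PresentedGroup.of i)⁻¹ * PresentedGroup.of j : Fgp n) ∈ Hsub n := by
  have key : ((PresentedGroup.of i)⁻¹ * PresentedGroup.of j : Fgp n) =
      ((PresentedGroup.of i) ^ 2)⁻¹ * (PresentedGroup.of i * PresentedGroup.of j) := by group
  rw [key]; exact mul_mem (inv_mem (sq_mem i)) (pair_mem i j)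

lemma pair_inv_right (i j : Fin n) :
    (PresentedGroup.of i * (PresentedGroup.of j)⁻¹ : Fgp n) ∈ Hsub n := by
  have key : (PresentedGroup.of i * (PresentedGroup.of j)⁻¹ : Fgp n) =
      (PresentedGroup.of i * PresentedGroup.of j) * ((PresentedGroup.of j) ^ 2)⁻¹ := by group
  rw [key]; exact mul_mem (pair_mem i j) (inv_mem (sq_mem j))

/-- Every generator of `Hsub` is a product of two letters. -/
lemma gen_eq_pair {x : Fgp n} (hx : x ∈ genSet n) :
    ∃ a b : Fin n, x = PresentedGroup.of a * PresentedGroup.of b := by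
  rcases hx with ⟨i, rfl⟩ | ⟨i, j, _, rfl⟩
  · exact ⟨i, i, by rw [pow_two]⟩
  · exact ⟨i, j, rfl⟩

lemma conj_mem (k : Fin n) {h : Fgp n} (hh : h ∈ Hsub n) :
    PresentedGroup.of k * h * (PresentedGroup.of k)⁻¹ ∈ Hsub n := by
  induction hh using Subgroup.closure_induction with
  | mem x hx =>
    obtain ⟨a, b, rfl⟩ := gen_eq_pair hx
    have key : (PresentedGroup.of k * (PresentedGroup.of a * PresentedGroup.of b) *
        (PresentedGroup.of k)⁻¹ : Fgp n) =
        (PresentedGroup.of k * PresentedGroup.of a) *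
          (PresentedGroup.of b * (PresentedGroup.of k)⁻¹) := by group
    rw [key]
    exact mul_mem (pair_mem k a) (pair_inv_right b k)
  | one => simpa using (Hsub n).one_mem
  | mul x y hx hy px py =>
    have key : (PresentedGroup.of k * (x * y) * (PresentedGroup.of k)⁻¹ : Fgp n) =
        (PresentedGroup.of k * x * (PresentedGroup.of k)⁻¹) *
          (PresentedGroup.of k * y * (PresentedGroup.of k)⁻¹) := by group
    rw [key]; exact mul_mem px py
  | inv x hx px =>
    have key : (PresentedGroup.of k * x⁻¹ * (PresentedGroup.of k)⁻¹ : Fgp n) =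
        (PresentedGroup.of k * x * (PresentedGroup.of k)⁻¹)⁻¹ := by group
    rw [key]; exact inv_mem px

lemma conj_inv_mem (k : Fin n) {h : Fgp n} (hh : h ∈ Hsub n) :
    (PresentedGroup.of k)⁻¹ * h * PresentedGroup.of k ∈ Hsub n := by
  induction hh using Subgroup.closure_induction with
  | mem x hx =>
    obtain ⟨a, b, rfl⟩ := gen_eq_pair hx
    have key : ((PresentedGroup.of k)⁻¹ * (PresentedGroup.of a * PresentedGroup.of b) *
        PresentedGroup.of k : Fgp n) =
        ((PresentedGroup.of k)⁻¹ * PresentedGroup.of a) *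
          (PresentedGroup.of b * PresentedGroup.of k) := by group
    rw [key]
    exact mul_mem (pair_inv_left k a) (pair_mem b k)
  | one => simpa using (Hsub n).one_mem
  | mul x y hx hy px py =>
    have key : ((PresentedGroup.of k)⁻¹ * (x * y) * PresentedGroup.of k : Fgp n) =
        ((PresentedGroup.of k)⁻¹ * x * PresentedGroup.of k) *
          ((PresentedGroup.of k)⁻¹ * y * PresentedGroup.of k) := by group
    rw [key]; exact mul_mem px py
  | inv x hx px =>
    have key : ((PresentedGroup.of k)⁻¹ * x⁻¹ * PresentedGroup.of k : Fgp n) =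
        ((PresentedGroup.of k)⁻¹ * x * PresentedGroup.of k)⁻¹ := by group
    rw [key]; exact inv_mem px

lemma normal : (Hsub n).Normal := by
  rw [← Subgroup.normalizer_eq_top_iff, eq_top_iff, ← PresentedGroup.closure_range_of,
    Subgroup.closure_le]
  rintro _ ⟨k, rfl⟩
  rw [SetLike.mem_coe, Subgroup.mem_normalizer_iff]
  intro h
  constructor
  · exact conj_mem k
  · intro hmem
    have := conj_inv_mem k hmem
    have key : (PresentedGroup.of k)⁻¹ * (PresentedGroup.of k * h * (PresentedGroup.of k)⁻¹) *
        PresentedGroup.of k = h := by group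
    rwa [key] at this

lemma zmod2_cases (a : Multiplicative (ZMod 2)) :
    a = 1 ∨ a = Multiplicative.ofAdd (1 : ZMod 2) := by
  revert a; decide

end HsubAux

theorem Hsub_eq_ker (n : ℕ) (hn : Even n)
    (φ : Fgp n →* Multiplicative (ZMod 2))
    (hφ : ∀ i : Fin n, φ (PresentedGroup.of i) = Multiplicative.ofAdd (1 : ZMod 2)) :
    Hsub n = φ.ker := by
  apply le_antisymm
  · rw [Hsub, Subgroup.closure_le]
    rintro x (⟨i, rfl⟩ | ⟨i, j, hij, rfl⟩) <;>
      simp only [SetLike.mem_coe, MonoidHom.mem_ker, map_pow, map_mul, hφ] <;> decide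
  · rcases Nat.eq_zero_or_pos n with hn0 | hn0
    · subst hn0
      intro x _
      have hx : x ∈ Subgroup.closure (Set.range (PresentedGroup.of :
          Fin 0 → Fgp 0)) := by
        rw [PresentedGroup.closure_range_of]; trivial
      refine Subgroup.closure_le (Hsub 0) |>.mpr ?_ hx
      rintro _ ⟨i, rfl⟩
      exact absurd i.2 (by omega)
    · haveI : NeZero n := ⟨by omega⟩
      intro x hx
      have hx' : x ∈ Subgroup.closure (Set.range (PresentedGroup.of :
          Fin n → Fgp n)) := by
        rw [PresentedGroup.closure_range_of]; trivial
      have hmain : (φ x = 1 → x ∈ Hsub n) ∧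
          (φ x = Multiplicative.ofAdd (1 : ZMod 2) →
            PresentedGroup.of (0 : Fin n) * x ∈ Hsub n) := by
        clear hx
        induction hx' using Subgroup.closure_induction with
        | mem y hy =>
          obtain ⟨i, rfl⟩ := hy
          constructor
          · intro h1; rw [hφ i] at h1; exact absurd h1 (by decide)
          · intro _; exact HsubAux.pair_mem 0 i
        | one =>
          constructor
          · intro _; exact (Hsub n).one_mem
          · intro h1; rw [map_one] at h1; exact absurd h1.symm (by decide)
        | mul y z hy hz py pz =>
          rcases HsubAux.zmod2_cases (φ y) with h1 | h1 <;>
            rcases HsubAux.zmod2_cases (φ z) with h2 | h2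
          · constructor
            · intro _; exact mul_mem (py.1 h1) (pz.1 h2)
            · intro hc
              rw [map_mul, h1, h2, one_mul] at hc
              exact absurd hc.symm (by decide)
          · constructor
            · intro hc
              rw [map_mul, h1, h2, one_mul] at hc
              exact absurd hc (by decide)
            · intro _
              have key : PresentedGroup.of (0 : Fin n) * (y * z) =
                  (PresentedGroup.of (0 : Fin n) * y * (PresentedGroup.of (0 : Fin n))⁻¹) *
                    (PresentedGroup.of (0 : Fin n) * z) := by group
              rw [key]
              exact mul_mem (HsubAux.conj_mem 0 (py.1 h1)) (pz.2 h2)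
          · constructor
            · intro hc
              rw [map_mul, h1, h2, mul_one] at hc
              exact absurd hc (by decide)
            · intro _
              have key : PresentedGroup.of (0 : Fin n) * (y * z) =
                  (PresentedGroup.of (0 : Fin n) * y) * z := by group
              rw [key]
              exact mul_mem (py.2 h1) (pz.1 h2)
          · constructor
            · intro _
              have hy2 := py.2 h1
              have hz2 := pz.2 h2
              -- simpler: y * z = (of 0 * y)⁻¹ conjugation; use direct identity instead
              have key2 : y * z =
                  ((PresentedGroup.of (0 : Fin n)) ^ 2)⁻¹ *
                    (PresentedGroup.of (0 : Fin n) * (PresentedGroup.of (0 : Fin n) * y) *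
                      (PresentedGroup.of (0 : Fin n))⁻¹) * (PresentedGroup.of (0 : Fin n) * z) := by
                group
              rw [key2]
              exact mul_mem (mul_mem (inv_mem (HsubAux.sq_mem 0))
                (HsubAux.conj_mem 0 hy2)) hz2
            · intro hc
              rw [map_mul, h1, h2] at hc
              exact absurd hc.symm (by decide)
        | inv y hy py =>
          have hinv : φ y⁻¹ = φ y := by
            rw [map_inv]
            rcases HsubAux.zmod2_cases (φ y) with h | h <;> rw [h] <;> decide
          rcases HsubAux.zmod2_cases (φ y) with h1 | h1
          · constructor
            · intro _; exact inv_mem (py.1 h1)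
            · intro hc; rw [hinv, h1] at hc; exact absurd hc.symm (by decide)
          · constructor
            · intro hc; rw [hinv, h1] at hc; exact absurd hc (by decide)
            · intro _
              have hy2 := py.2 h1
              have key : PresentedGroup.of (0 : Fin n) * y⁻¹ =
                  (PresentedGroup.of (0 : Fin n) * (PresentedGroup.of (0 : Fin n) * y)⁻¹ *
                    (PresentedGroup.of (0 : Fin n))⁻¹) * (PresentedGroup.of (0 : Fin n)) ^ 2 := by
                group
              rw [key]
              exact mul_mem (HsubAux.conj_mem 0 (inv_mem hy2)) (HsubAux.sq_mem 0)
      exact hmain.1 hx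
end

section
/- Let G be a group, H a normal subgroup of index 2, γ ∈ G \ H, A an abelian group, δ : H → A a surjective homomorphism satisfying δ(γ⁻¹hγ) = −δ(h) for all h ∈ H, and A' ≤ A a subgroup of index 3. Then K = δ⁻¹(A') is normal in G and G/K is a nonabelian group of order 6 (hence isomorphic to S₃ ≅ D₆). -/
/-- The quotient `G ⧸ K` is a nonabelian group of order 6 (hence isomorphic to
`S₃ ≅ D₆`). -/
def quotNonabelianOrderSix {G : Type*} [Group G] (K : Subgroup G) (hK : K.Normal) : Prop :=
  letI := hK
  Nat.card (G ⧸ K) = 6 ∧ (∃ a b : G ⧸ K, a * b ≠ b * a) ∧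
    Nonempty ((G ⧸ K) ≃* Equiv.Perm (Fin 3))

/-- `Equiv.permCongr` as a `MulEquiv`. -/
noncomputable def permCongrMulEquiv {α β : Type*} (e : α ≃ β) :
    Equiv.Perm α ≃* Equiv.Perm β :=
  { Equiv.permCongr e with
    map_mul' := fun p q => by
      ext x
      simp [Equiv.permCongr_apply, Equiv.Perm.mul_apply] }

/-- A nonabelian group of order 6 is isomorphic to `S₃`. -/
theorem aux_S3 {Q : Type*} [Group Q] (h6 : Nat.card Q = 6)
    (hna : ∃ a b : Q, a * b ≠ b * a) : Nonempty (Q ≃* Equiv.Perm (Fin 3)) := by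
  obtain ⟨a, b, hab⟩ := hna
  have hfin : Finite Q := Nat.finite_of_card_ne_zero (by omega)
  obtain ⟨x, hx⟩ := exists_prime_orderOf_dvd_card' (G := Q) 2 (by rw [h6]; norm_num)
  set S := Subgroup.zpowers x with hS
  have hScard : Nat.card S = 2 := by rw [hS, Nat.card_zpowers, hx]
  have hSindex : S.index = 3 := by
    have h := Subgroup.card_mul_index S
    rw [hScard, h6] at h; omega
  set φ := MulAction.toPermHom Q (Q ⧸ S) with hφ
  have hker : φ.ker = ⊥ := by
    by_contra hne
    have hksub : φ.ker ≤ S := by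
      rw [hφ, ← Subgroup.normalCore_eq_ker]; exact Subgroup.normalCore_le S
    have hfinS : Finite S := Nat.finite_of_card_ne_zero (by omega)
    have hfinK : Finite φ.ker := Finite.Set.subset (S : Set Q) hksub
    have hkcard : Nat.card φ.ker ∣ 2 := hScard ▸ Subgroup.card_dvd_of_le hksub
    have hk1 : Nat.card φ.ker ≠ 1 := by
      intro h1
      exact hne (Subgroup.eq_bot_of_card_eq _ h1)
    have hk2 : Nat.card φ.ker = 2 :=
      (Nat.prime_two.eq_one_or_self_of_dvd _ hkcard).resolve_left hk1
    have hkS : φ.ker = S := Subgroup.eq_of_le_of_card_ge hksub (by omega)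
    have hSnormal : S.Normal := hkS ▸ φ.normal_ker
    -- x is central
    have hx1 : x ≠ 1 := by
      intro h; rw [h, orderOf_one] at hx; omega
    have hxsq : x * x = 1 := by
      have := pow_orderOf_eq_one x
      rw [hx, pow_two] at this; exact this
    have hcent : x ∈ Subgroup.center Q := by
      rw [Subgroup.mem_center_iff]
      intro g
      have hmem : g * x * g⁻¹ ∈ S := hSnormal.conj_mem x (Subgroup.mem_zpowers x) g
      obtain ⟨k, hk0⟩ := hmem
      have hk : x ^ k = g * x * g⁻¹ := hk0
      have hone : ∀ m : ℤ, x ^ (2 * m) = 1 := by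
        intro m
        rw [zpow_mul, zpow_two, hxsq, one_zpow]
      have hxk : x ^ k = 1 ∨ x ^ k = x := by
        rcases Int.even_or_odd k with ⟨m, hm⟩ | ⟨m, hm⟩
        · left; rw [hm, ← two_mul, hone]
        · right; rw [hm, zpow_add, hone, one_mul, zpow_one]
      rcases hxk with h | h
      · exfalso
        rw [h] at hk
        have : g * x * g⁻¹ ≠ 1 := by
          intro hc
          apply hx1
          have := congrArg (fun z => g⁻¹ * z * g) hc
          simpa [mul_assoc] using this
        exact this hk.symm
      · rw [h] at hk
        have := congrArg (fun z => z * g) hk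
        simpa [mul_assoc] using this.symm
    -- quotient by center is cyclic
    have hle : S ≤ Subgroup.center Q := by
      rw [hS, Subgroup.zpowers_le]; exact hcent
    have hidx : (Subgroup.center Q).index ∣ 3 := hSindex ▸ Subgroup.index_dvd_of_le hle
    have hcomm : ∀ u v : Q, u * v = v * u := by
      rcases (Nat.Prime.eq_one_or_self_of_dvd (by norm_num) _ hidx) with h1 | h3
      · have : Subgroup.center Q = ⊤ := Subgroup.index_eq_one.mp h1
        intro u v
        have hu : u ∈ Subgroup.center Q := this ▸ Subgroup.mem_top u
        exact (Subgroup.mem_center_iff.mp hu v).symm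
      · haveI : Fact (Nat.Prime 3) := ⟨by norm_num⟩
        haveI : IsCyclic (Q ⧸ Subgroup.center Q) :=
          isCyclic_of_prime_card (p := 3) (by rw [← Subgroup.index_eq_card]; exact h3)
        exact fun u v =>
          commutative_of_cyclic_center_quotient (QuotientGroup.mk' (Subgroup.center Q))
            (by rw [QuotientGroup.ker_mk']) u v
    exact hab (hcomm a b)
  have hinj : Function.Injective φ := (MonoidHom.ker_eq_bot_iff φ).mp hker
  have hcardQS : Nat.card (Q ⧸ S) = 3 := by rw [← Subgroup.index_eq_card]; exact hSindex
  have hfinQS : Finite (Q ⧸ S) := Nat.finite_of_card_ne_zero (by omega)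
  have hcardPerm : Nat.card (Equiv.Perm (Q ⧸ S)) = 6 := by
    haveI : Fintype (Q ⧸ S) := Fintype.ofFinite _
    rw [Nat.card_eq_fintype_card, Fintype.card_perm, ← Nat.card_eq_fintype_card, hcardQS]
    rfl
  have hbij : Function.Bijective φ := by
    rw [Nat.bijective_iff_injective_and_card]
    exact ⟨hinj, by rw [h6, hcardPerm]⟩
  have e : (Q ⧸ S) ≃ Fin 3 := by
    haveI : Fintype (Q ⧸ S) := Fintype.ofFinite _
    exact Fintype.equivFinOfCardEq (by rw [← Nat.card_eq_fintype_card, hcardQS])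
  exact ⟨(MulEquiv.ofBijective φ hbij).trans (permCongrMulEquiv e)⟩

theorem preimage_of_index_three_gives_S3_quotient {G : Type*} [Group G]
    (H : Subgroup G) (hHn : H.Normal) (hH2 : H.index = 2)
    (γ : G) (hγ : γ ∉ H)
    {A : Type*} [AddCommGroup A] (δ : ↥H →* Multiplicative A)
    (hsurj : Function.Surjective δ)
    (hconj : ∀ (h : G) (hh : h ∈ H) (hc : γ⁻¹ * h * γ ∈ H),
      δ ⟨γ⁻¹ * h * γ, hc⟩ = (δ ⟨h, hh⟩)⁻¹)
    (A' : AddSubgroup A) (hA3 : A'.index = 3) :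
    ∃ hK : (((AddSubgroup.toSubgroup A').comap δ).map H.subtype).Normal,
      quotNonabelianOrderSix (((AddSubgroup.toSubgroup A').comap δ).map H.subtype) hK := by
  set A'm : Subgroup (Multiplicative A) := AddSubgroup.toSubgroup A' with hA'm
  set C : Subgroup H := A'm.comap δ with hC
  set K : Subgroup G := C.map H.subtype with hKdef
  have hKH : K ≤ H := Subgroup.map_subtype_le C
  -- congruence for δ
  have dcongr : ∀ (a b : G) (ha : a ∈ H) (hb : b ∈ H), a = b →
      δ ⟨a, ha⟩ = δ ⟨b, hb⟩ := by
    rintro a b ha hb rfl; rfl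
  -- membership characterization
  have memK : ∀ (g : G) (hg : g ∈ H), (g ∈ K ↔ δ ⟨g, hg⟩ ∈ A'm) := by
    intro g hg
    constructor
    · rintro ⟨⟨y, hy⟩, hyC, rfl⟩
      exact hyC
    · intro hδ
      exact ⟨⟨g, hg⟩, hδ, rfl⟩
  -- conjugation by elements of H preserves δ-value
  have hconjH : ∀ (y g : G) (hy : y ∈ H) (hg : g ∈ H) (hc : y * g * y⁻¹ ∈ H),
      δ ⟨y * g * y⁻¹, hc⟩ = δ ⟨g, hg⟩ := by
    intro y g hy hg hc
    have : (⟨y * g * y⁻¹, hc⟩ : H) = ⟨y, hy⟩ * ⟨g, hg⟩ * ⟨y, hy⟩⁻¹ := by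
      ext; rfl
    rw [this, map_mul, map_mul, map_inv, mul_comm (δ ⟨y, hy⟩), mul_assoc,
      mul_inv_cancel, mul_one]
  -- conjugation by γ inverts δ-value
  have hmemγ : ∀ (g : G), g ∈ H → γ * g * γ⁻¹ ∈ H := fun g hg => hHn.conj_mem g hg γ
  have hconjγ : ∀ (g : G) (hg : g ∈ H) (hc : γ * g * γ⁻¹ ∈ H),
      δ ⟨γ * g * γ⁻¹, hc⟩ = (δ ⟨g, hg⟩)⁻¹ := by
    intro g hg hc
    have hc2 : γ⁻¹ * (γ * g * γ⁻¹) * γ ∈ H := by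
      have : γ⁻¹ * (γ * g * γ⁻¹) * γ = g := by group
      rw [this]; exact hg
    have h1 := hconj (γ * g * γ⁻¹) hc hc2
    have h2 : δ ⟨γ⁻¹ * (γ * g * γ⁻¹) * γ, hc2⟩ = δ ⟨g, hg⟩ :=
      dcongr _ _ _ _ (by group)
    rw [h2] at h1
    rw [h1, inv_inv]
  -- normality of K
  have hKn : K.Normal := by
    constructor
    intro g hgK x
    have hgH : g ∈ H := hKH hgK
    have hδg : δ ⟨g, hgH⟩ ∈ A'm := (memK g hgH).mp hgK
    by_cases hxH : x ∈ H
    · have hc : x * g * x⁻¹ ∈ H := H.mul_mem (H.mul_mem hxH hgH) (H.inv_mem hxH)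
      rw [memK _ hc, hconjH x g hxH hgH hc]
      exact hδg
    · -- x = γ * y with y ∈ H
      have hy : γ⁻¹ * x ∈ H := by
        rw [Subgroup.mul_mem_iff_of_index_two hH2]
        simp only [inv_mem_iff]
        exact iff_of_false hγ hxH
      set y := γ⁻¹ * x with hydef
      have hxy : x = γ * y := by rw [hydef]; group
      have hc1 : y * g * y⁻¹ ∈ H := H.mul_mem (H.mul_mem hy hgH) (H.inv_mem hy)
      have hc2 : γ * (y * g * y⁻¹) * γ⁻¹ ∈ H := hmemγ _ hc1
      have hc : x * g * x⁻¹ ∈ H := by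
        have : x * g * x⁻¹ = γ * (y * g * y⁻¹) * γ⁻¹ := by rw [hxy]; group
        rw [this]; exact hc2
      rw [memK _ hc]
      have e1 : δ ⟨x * g * x⁻¹, hc⟩ = δ ⟨γ * (y * g * y⁻¹) * γ⁻¹, hc2⟩ :=
        dcongr _ _ _ _ (by rw [hxy]; group)
      rw [e1, hconjγ _ hc1 hc2, hconjH y g hy hgH hc1]
      exact A'm.inv_mem hδg
  refine ⟨hKn, ?_⟩
  haveI := hKn
  -- cardinality
  have hCindex : C.index = 3 := by
    rw [hC, Subgroup.index_comap_of_surjective _ hsurj, hA'm,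
      AddSubgroup.index_toSubgroup, hA3]
  have hKindex : K.index = 6 := by
    have h1 : K.relIndex H * H.index = K.index := Subgroup.relIndex_mul_index hKH
    have h2 : K.relIndex H = C.index := by
      rw [Subgroup.relIndex, Subgroup.subgroupOf, hKdef,
        Subgroup.comap_map_eq_self_of_injective (Subgroup.subtype_injective H)]
    rw [h2, hCindex, hH2] at h1
    omega
  have hcard6 : Nat.card (G ⧸ K) = 6 := by rw [← Subgroup.index_eq_card]; exact hKindex
  -- nonabelian
  have hna : ∃ a b : G ⧸ K, a * b ≠ b * a := by
    by_contra hcon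
    push_neg at hcon
    -- then squares of δ-values lie in A'
    have hsq : ∀ h : H, (δ h) ^ 2 ∈ A'm := by
      intro h
      have hcm : (((h : G) * γ : G) : G ⧸ K) = ((γ * (h : G) : G) : G ⧸ K) := by
        rw [QuotientGroup.mk_mul, QuotientGroup.mk_mul]
        exact hcon _ _
      have hcK : ((h : G) * γ)⁻¹ * (γ * (h : G)) ∈ K := QuotientGroup.eq.mp hcm
      set c := ((h : G) * γ)⁻¹ * (γ * (h : G)) with hcdef
      have hinm : γ⁻¹ * (h : G)⁻¹ * γ ∈ H := by
        have := hHn.conj_mem ((h : G)⁻¹) (H.inv_mem h.2) γ⁻¹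
        simpa [mul_assoc] using this
      have hcH : c ∈ H := by
        have hceq : c = (γ⁻¹ * (h : G)⁻¹ * γ) * (h : G) := by rw [hcdef]; group
        rw [hceq]
        exact H.mul_mem hinm h.2
      have hδc : δ ⟨c, hcH⟩ ∈ A'm := (memK c hcH).mp hcK
      have hδceq : δ ⟨c, hcH⟩ = (δ h) ^ 2 := by
        have hmul : (⟨(γ⁻¹ * (h : G)⁻¹ * γ) * (h : G), H.mul_mem hinm h.2⟩ : H)
            = ⟨γ⁻¹ * (h : G)⁻¹ * γ, hinm⟩ * ⟨(h : G), h.2⟩ := by ext; rfl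
        have e1 : δ ⟨c, hcH⟩ = δ ⟨(γ⁻¹ * (h : G)⁻¹ * γ) * (h : G), H.mul_mem hinm h.2⟩ :=
          dcongr _ _ _ _ (by rw [hcdef]; group)
        have e2 : δ ⟨γ⁻¹ * (h : G)⁻¹ * γ, hinm⟩ = (δ ⟨(h : G)⁻¹, H.inv_mem h.2⟩)⁻¹ := by
          have h0 := hconj ((h : G)⁻¹) (H.inv_mem h.2) (by simpa [mul_assoc] using hinm)
          rw [← h0]
        have e3 : (⟨(h : G)⁻¹, H.inv_mem h.2⟩ : H) = h⁻¹ := by ext; rfl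
        have e4 : (⟨(h : G), h.2⟩ : H) = h := by ext; rfl
        rw [e1, hmul, map_mul, e2, e3, map_inv, inv_inv, e4, ← pow_two]
      rw [hδceq] at hδc
      exact hδc
    -- all squares in A'm, and all cubes too, hence A'm = ⊤
    have hall : ∀ m : Multiplicative A, m ∈ A'm := by
      intro m
      obtain ⟨h, rfl⟩ := hsurj m
      have h2 : (δ h) ^ 2 ∈ A'm := hsq h
      have h3 : (δ h) ^ 3 ∈ A'm := by
        have := A'm.pow_index_mem (δ h)
        rwa [hA'm, AddSubgroup.index_toSubgroup, hA3] at this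
      have : δ h = (δ h) ^ 3 * ((δ h) ^ 2)⁻¹ := by group
      rw [this]
      exact A'm.mul_mem h3 (A'm.inv_mem h2)
    have htop : A'm = ⊤ := by
      rw [Subgroup.eq_top_iff']; exact hall
    have : A'm.index = 1 := by rw [htop, Subgroup.index_top]
    rw [hA'm, AddSubgroup.index_toSubgroup, hA3] at this
    omega
  exact ⟨hcard6, hna, aux_S3 hcard6 hna⟩
end
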